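/- arXiv:2311.13958 — 3 statements merged into one kernel-verified Lean document; each statement's English description precedes it below -/
import Mathlib

section
/- The tensor U₁ norm is the tightest convex minorant of the tensor U₀ norm on the unit ball of the tensor U_∞ norm: let S = {A ∈ E : ‖A‖_{U,∞} ≤ 1}. If g : E → ℝ is convex on S (in the sense ConvexOn ℝ S g) and satisfies g(B) ≤ ‖B‖_{U,0} for all B ∈ S, then g(A) ≤ ‖A‖_{U,1} for all A ∈ S. -/
/-!
A point `x` of the cube `[-1, 1]^ι` with a fractional coordinate `x j` is the convex combination,
with weights `1 - |x j|` and `|x j|`, of the points obtained by replacing `x j` by `0` and by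
`sign (x j)`. Both have fewer fractional coordinates, and the same weights average their `ℓ₁`
norms back to that of `x`. Inducting on the fractional coordinates therefore reduces the bound
to points with entries in `{0, ±1}`, where the `ℓ₁` norm is the size of the support.
Composing with the linear equivalence `x ↦ U⁻¹ x` turns `S` into that cube.
-/

/-- The tensor `U₁` norm: `‖A‖_{U,1} = ∑ i, |(U A) i|`. -/
noncomputable def tensorU1 {ι : Type*} [Fintype ι]
    (U : EuclideanSpace ℝ ι ≃ₗᵢ[ℝ] EuclideanSpace ℝ ι) (A : EuclideanSpace ℝ ι) : ℝ :=
  ∑ i, |U A i|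

/-- The tensor `U_∞` norm: `‖A‖_{U,∞} = max_i |(U A) i|`. -/
noncomputable def tensorUinf {ι : Type*} [Fintype ι] [Nonempty ι]
    (U : EuclideanSpace ℝ ι ≃ₗᵢ[ℝ] EuclideanSpace ℝ ι) (A : EuclideanSpace ℝ ι) : ℝ :=
  Finset.univ.sup' Finset.univ_nonempty fun i => |U A i|

/-- The tensor `U₀` norm: the number of nonzero entries of `U A`, as a real number. -/
noncomputable def tensorU0 {ι : Type*} [Fintype ι]
    (U : EuclideanSpace ℝ ι ≃ₗᵢ[ℝ] EuclideanSpace ℝ ι) (A : EuclideanSpace ℝ ι) : ℝ :=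
  (Finset.univ.filter fun i => U A i ≠ 0).card

open Metric Function

section

variable {ι : Type*}

theorem mem_closedBall_zero_one_iff_forall_abs_le [Fintype ι] {x : ι → ℝ} :
    x ∈ closedBall (0 : ι → ℝ) 1 ↔ ∀ i, |x i| ≤ 1 := by
  simp only [mem_closedBall_zero_iff, pi_norm_le_iff_of_nonneg zero_le_one, Real.norm_eq_abs]

theorem update_mem_closedBall_zero_one [Fintype ι] [DecidableEq ι] {x : ι → ℝ}
    (hx : x ∈ closedBall (0 : ι → ℝ) 1) (j : ι) {t : ℝ} (ht : |t| ≤ 1) :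
    update x j t ∈ closedBall (0 : ι → ℝ) 1 := by
  rw [mem_closedBall_zero_one_iff_forall_abs_le] at hx ⊢
  intro i
  rcases eq_or_ne i j with rfl | hij
  · simpa using ht
  · simpa [hij] using hx i

theorem sum_abs_update_add_abs [Fintype ι] [DecidableEq ι] (x : ι → ℝ) (j : ι) (t : ℝ) :
    ∑ i, |update x j t i| + |x j| = ∑ i, |x i| + |t| := by
  rw [Finset.sum_eq_add_sum_sdiff_singleton_of_mem (Finset.mem_univ j) fun i => |x i|]
  simp only [apply_update (fun _ => abs), Finset.sum_update_of_mem (Finset.mem_univ j)]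
  ring

theorem sum_abs_eq_card_filter_ne_zero [Fintype ι] {x : ι → ℝ}
    (hx : ∀ i, x i = 0 ∨ |x i| = 1) :
    ∑ i, |x i| = (Finset.univ.filter fun i => x i ≠ 0).card := by
  rw [Finset.card_filter, Nat.cast_sum]
  refine Finset.sum_congr rfl fun i _ => ?_
  rcases hx i with h | h
  · simp [h]
  · simp [h, abs_ne_zero.mp (h ▸ one_ne_zero)]

theorem one_sub_abs_smul_update_zero_add_abs_smul_update_sign [DecidableEq ι]
    (x : ι → ℝ) (j : ι) :
    (1 - |x j|) • update x j 0 + |x j| • update x j (SignType.sign (x j) : ℝ) = x := by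
  ext i
  rcases eq_or_ne i j with rfl | hij
  · simp
  · simp [hij]; ring

theorem sign_eq_zero_or_abs_sign_eq_one (t : ℝ) :
    (SignType.sign t : ℝ) = 0 ∨ |(SignType.sign t : ℝ)| = 1 := by
  rcases lt_trichotomy t 0 with h | rfl | h <;> simp [*]

theorem ConvexOn.le_sum_abs_of_abs_eq_one_of_notMem [Fintype ι] [DecidableEq ι]
    {f : (ι → ℝ) → ℝ} (hf : ConvexOn ℝ (closedBall 0 1) f)
    (hle : ∀ x ∈ closedBall (0 : ι → ℝ) 1, f x ≤ (Finset.univ.filter fun i => x i ≠ 0).card)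
    (s : Finset ι) {x : ι → ℝ} (hx : x ∈ closedBall 0 1)
    (hvertex : ∀ i ∉ s, x i = 0 ∨ |x i| = 1) : f x ≤ ∑ i, |x i| := by
  induction s using Finset.induction_on generalizing x with
  | empty =>
    rw [sum_abs_eq_card_filter_ne_zero fun i => hvertex i (Finset.notMem_empty i)]
    exact hle x hx
  | insert j s _ ih =>
    set a := |x j|
    set σ : ℝ := (SignType.sign (x j) : ℝ)
    have hσ : σ = 0 ∨ |σ| = 1 := sign_eq_zero_or_abs_sign_eq_one (x j)
    have hupdate : ∀ t : ℝ, (t = 0 ∨ |t| = 1) →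
        ∀ i ∉ s, update x j t i = 0 ∨ |update x j t i| = 1 := by
      intro t ht i hi
      rcases eq_or_ne i j with rfl | hij
      · simpa using ht
      · simpa [hij] using hvertex i (by simp [hij, hi])
    have hx0 := update_mem_closedBall_zero_one hx j (t := 0) (by simp)
    have hxσ := update_mem_closedBall_zero_one hx j (t := σ)
      (hσ.elim (fun h => by simp [h]) le_of_eq)
    have ha1 : a ≤ 1 := mem_closedBall_zero_one_iff_forall_abs_le.1 hx j
    have haσ : a * |σ| = a := by rw [← abs_mul, self_mul_sign, abs_abs]
    calc f x = f ((1 - a) • update x j 0 + a • update x j σ) :=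
          congrArg f (one_sub_abs_smul_update_zero_add_abs_smul_update_sign x j).symm
      _ ≤ (1 - a) * f (update x j 0) + a * f (update x j σ) :=
          hf.2 hx0 hxσ (by linarith) (abs_nonneg _) (by ring)
      _ ≤ (1 - a) * ∑ i, |update x j 0 i| + a * ∑ i, |update x j σ i| := by
          gcongr
          exacts [ih hx0 (hupdate 0 (Or.inl rfl)), ih hxσ (hupdate σ hσ)]
      _ = ∑ i, |x i| := by
          linear_combination (1 - a) * sum_abs_update_add_abs x j 0 +
            a * sum_abs_update_add_abs x j σ + haσ

theorem ConvexOn.le_sum_abs_of_le_card_support [Fintype ι] {f : (ι → ℝ) → ℝ}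
    (hf : ConvexOn ℝ (closedBall 0 1) f)
    (hle : ∀ x ∈ closedBall (0 : ι → ℝ) 1, f x ≤ (Finset.univ.filter fun i => x i ≠ 0).card)
    {x : ι → ℝ} (hx : x ∈ closedBall 0 1) : f x ≤ ∑ i, |x i| := by
  classical
  exact hf.le_sum_abs_of_abs_eq_one_of_notMem hle Finset.univ hx (by simp)

end

/-- Maximality half of Property 2(iii): the tensor `U₁` norm is the tightest convex
minorant of the tensor `U₀` norm on the unit ball `S` of the tensor `U_∞` norm. -/
theorem tensorU1_tightest_convex_minorant {ι : Type*} [Fintype ι] [Nonempty ι]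
    (U : EuclideanSpace ℝ ι ≃ₗᵢ[ℝ] EuclideanSpace ℝ ι)
    (S : Set (EuclideanSpace ℝ ι)) (hS : S = {A | tensorUinf U A ≤ 1})
    (g : EuclideanSpace ℝ ι → ℝ) (hg : ConvexOn ℝ S g)
    (hle : ∀ B ∈ S, g B ≤ tensorU0 U B) :
    ∀ A ∈ S, g A ≤ tensorU1 U A := by
  let L : (ι → ℝ) →ₗ[ℝ] EuclideanSpace ℝ ι :=
    U.symm.toLinearEquiv.toLinearMap ∘ₗ (WithLp.linearEquiv 2 ℝ (ι → ℝ)).symm.toLinearMap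
  have hUL (x : ι → ℝ) : U (L x) = WithLp.toLp 2 x := by simp [L]
  have hpre : L ⁻¹' S = closedBall 0 1 := by
    ext x
    rw [Set.mem_preimage, mem_closedBall_zero_one_iff_forall_abs_le]
    simp [hS, tensorUinf, hUL]
  have hgL : ConvexOn ℝ (closedBall 0 1) (g ∘ L) := hpre ▸ hg.comp_linearMap L
  intro A hA
  have hLA : L (U A).ofLp = A := by simp [L]
  have hUA : (U A).ofLp ∈ closedBall 0 1 := by rw [← hpre, Set.mem_preimage, hLA]; exact hA
  simpa [hLA, tensorU1] using hgL.le_sum_abs_of_le_card_support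
    (fun x hx => by simpa [tensorU0, hUL] using hle (L x) (show x ∈ L ⁻¹' S by rwa [hpre])) hUA
end

section
/- The slice-wise sum of nuclear norms is the dual norm of the slice-wise maximum of spectral norms: for every family X : Fin K → Matrix (Fin m) (Fin n) ℝ, the set {∑_{k} ∑_{i,j} (X k) i j · (Y k) i j : Y : Fin K → Matrix (Fin m) (Fin n) ℝ with ‖Y k‖₂ ≤ 1 for every k} has greatest element ∑_{k} ‖X k‖_*. -/
/-- The spectral norm (largest singular value) of a real matrix: the `L2` operator norm
of the associated Euclidean linear map. -/
noncomputable def matrixSpectralNorm {m n : ℕ} (A : Matrix (Fin m) (Fin n) ℝ) : ℝ :=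
  ‖LinearMap.toContinuousLinearMap (Matrix.toEuclideanLin A)‖

/-- The positive semidefinite square root of a positive semidefinite matrix
(removed from Mathlib; restated with its old definition). -/
noncomputable def Matrix.PosSemidef.sqrt {n : Type*} [Fintype n] [DecidableEq n]
    {A : Matrix n n ℝ} (hA : A.PosSemidef) : Matrix n n ℝ :=
  hA.1.eigenvectorUnitary.1 * Matrix.diagonal ((↑) ∘ (√·) ∘ hA.1.eigenvalues) *
  (star hA.1.eigenvectorUnitary : Matrix n n ℝ)

/-- The nuclear norm (sum of singular values) of a real matrix: the trace of the
positive-semidefinite square root of `Aᴴ * A` (over `ℝ`, `Aᴴ = Aᵀ`). -/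
noncomputable def nuclearNorm {m n : ℕ} (A : Matrix (Fin m) (Fin n) ℝ) : ℝ :=
  (Matrix.posSemidef_conjTranspose_mul_self A).sqrt.trace

/-! Diagonalise `Aᵀ A` by an orthonormal eigenbasis `(vₚ)`. The images `A vₚ` are then pairwise
orthogonal and `∑ ‖A vₚ‖` is the nuclear norm of `A`, while the Frobenius pairing `⟨A, Y⟩` equals
`∑ ⟪A vₚ, Y vₚ⟫` in any orthonormal basis. By Cauchy–Schwarz this is at most `∑ ‖A vₚ‖` when
`‖Y‖₂ ≤ 1`, with equality for the partial isometry `Y x = ∑ ⟪vₚ, x⟫ A vₚ / ‖A vₚ‖`. The slice-wise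
statement follows by summing over slices. -/

open Finset InnerProductSpace
open scoped RealInnerProductSpace

section HilbertSchmidt

variable {𝕜 ι E F : Type*} [RCLike 𝕜] [Fintype ι]
  [NormedAddCommGroup E] [InnerProductSpace 𝕜 E] [FiniteDimensional 𝕜 E]
  [NormedAddCommGroup F] [InnerProductSpace 𝕜 F] [FiniteDimensional 𝕜 F]

theorem LinearMap.sum_inner_apply_eq_trace (T S : E →ₗ[𝕜] F) (b : OrthonormalBasis ι 𝕜 E) :
    ∑ i, inner 𝕜 (T (b i)) (S (b i)) = LinearMap.trace 𝕜 E (LinearMap.adjoint T ∘ₗ S) := by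
  simp [LinearMap.trace_eq_sum_inner _ b, LinearMap.adjoint_inner_right]

end HilbertSchmidt

section Real

variable {ι E F : Type*} [Fintype ι] [NormedAddCommGroup E] [InnerProductSpace ℝ E]
  [NormedAddCommGroup F] [InnerProductSpace ℝ F]

theorem norm_sum_sq_of_pairwise_inner_eq_zero {v : ι → F}
    (hv : Pairwise fun i j => ⟪v i, v j⟫ = 0) : ‖∑ i, v i‖ ^ 2 = ∑ i, ‖v i‖ ^ 2 := by
  simp_rw [← real_inner_self_eq_norm_sq, sum_inner, inner_sum]
  exact sum_congr rfl fun i _ => sum_eq_single i (fun j _ hji => hv hji.symm) (by simp)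

theorem norm_sum_rankOne_le_one (b : OrthonormalBasis ι ℝ E) {u : ι → F}
    (hu : Pairwise fun i j => ⟪u i, u j⟫ = 0) (hu_le : ∀ i, ‖u i‖ ≤ 1) :
    ‖∑ i, rankOne ℝ (u i) (b i)‖ ≤ 1 := by
  refine ContinuousLinearMap.opNorm_le_bound _ zero_le_one fun x => ?_
  rw [one_mul, ← pow_le_pow_iff_left₀ (norm_nonneg _) (norm_nonneg _) two_ne_zero]
  calc ‖(∑ i, rankOne ℝ (u i) (b i)) x‖ ^ 2 = ∑ i, ⟪b i, x⟫ ^ 2 * ‖u i‖ ^ 2 := by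
        rw [_root_.sum_apply, norm_sum_sq_of_pairwise_inner_eq_zero]
        · simp [norm_smul, mul_pow]
        · intro i j hij
          simp [inner_smul_left, inner_smul_right, hu hij]
    _ ≤ ∑ i, ⟪b i, x⟫ ^ 2 := by
        gcongr with i
        exact mul_le_of_le_one_right (sq_nonneg _) (pow_le_one₀ (norm_nonneg _) (hu_le i))
    _ = ‖x‖ ^ 2 := b.sum_sq_inner_right x

theorem sum_inner_le_sum_norm {b : ι → E} (hb : ∀ i, ‖b i‖ ≤ 1) (v : ι → F) {S : E →L[ℝ] F}
    (hS : ‖S‖ ≤ 1) : ∑ i, ⟪v i, S (b i)⟫ ≤ ∑ i, ‖v i‖ := by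
  gcongr with i
  have hSb : ‖S (b i)‖ ≤ 1 :=
    (S.le_opNorm (b i)).trans (mul_le_one₀ hS (norm_nonneg _) (hb i))
  calc ⟪v i, S (b i)⟫ ≤ ‖v i‖ * ‖S (b i)‖ := real_inner_le_norm _ _
    _ ≤ ‖v i‖ := mul_le_of_le_one_right (norm_nonneg _) hSb

theorem exists_norm_le_one_inner_apply_eq_norm (b : OrthonormalBasis ι ℝ E) {v : ι → F}
    (hv : Pairwise fun i j => ⟪v i, v j⟫ = 0) :
    ∃ S : E →L[ℝ] F, ‖S‖ ≤ 1 ∧ ∀ i, ⟪v i, S (b i)⟫ = ‖v i‖ := by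
  classical
  -- `‖v i‖⁻¹ • v i = 0` when `v i = 0`, so no case split is needed.
  refine ⟨∑ i, rankOne ℝ (‖v i‖⁻¹ • v i) (b i), norm_sum_rankOne_le_one b ?_ ?_, fun i => ?_⟩
  · intro i j hij
    simp [inner_smul_left, inner_smul_right, hv hij]
  · intro i
    rw [norm_smul, norm_inv, norm_norm]
    exact inv_mul_le_one_of_le₀ le_rfl (norm_nonneg _)
  · simp only [FunLike.coe_sum, Finset.sum_apply, rankOne_apply, b.inner_eq_ite,
      ite_smul, one_smul, zero_smul, sum_ite_eq', mem_univ, if_true, inner_smul_right,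
      real_inner_self_eq_norm_sq]
    rw [sq, ← mul_assoc, inv_mul_mul_self]

end Real

namespace Matrix

variable {m n : Type*} [Fintype m] [Fintype n] [DecidableEq n]

theorem sum_mul_eq_sum_inner_toEuclideanLin {ι : Type*} [Fintype ι] (A Y : Matrix m n ℝ)
    (b : OrthonormalBasis ι ℝ (EuclideanSpace ℝ n)) :
    ∑ i, ∑ j, A i j * Y i j = ∑ p, ⟪A.toEuclideanLin (b p), Y.toEuclideanLin (b p)⟫ := by
  rw [LinearMap.sum_inner_apply_eq_trace,
    ← LinearMap.sum_inner_apply_eq_trace _ _ (EuclideanSpace.basisFun n ℝ), sum_comm]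
  simp [toLpLin_apply, PiLp.inner_apply, mul_comm]

theorem inner_toEuclideanLin_of_mulVec_eq_smul [DecidableEq m] (A : Matrix m n ℝ)
    (x : EuclideanSpace ℝ n) {y : EuclideanSpace ℝ n} {μ : ℝ} (hy : (Aᴴ * A) *ᵥ y = μ • y) :
    ⟪A.toEuclideanLin x, A.toEuclideanLin y⟫ = μ * ⟪x, y⟫ := by
  rw [← LinearMap.adjoint_inner_right, ← toEuclideanLin_conjTranspose_eq_adjoint,
    ← LinearMap.comp_apply, ← toLpLin_mul_same, toLpLin_apply, hy, WithLp.toLp_smul,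
    WithLp.toLp_ofLp, inner_smul_right]

end Matrix

section SingularValueDecomposition

open Matrix

variable {m n : ℕ}

noncomputable abbrev rightSingularBasis (A : Matrix (Fin m) (Fin n) ℝ) :
    OrthonormalBasis (Fin n) ℝ (EuclideanSpace ℝ (Fin n)) :=
  (posSemidef_conjTranspose_mul_self A).1.eigenvectorBasis

theorem pairwise_inner_toEuclideanLin_rightSingularBasis (A : Matrix (Fin m) (Fin n) ℝ) :
    Pairwise fun p q => ⟪A.toEuclideanLin (rightSingularBasis A p),
      A.toEuclideanLin (rightSingularBasis A q)⟫ = 0 := fun p q hpq => by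
  dsimp only
  rw [inner_toEuclideanLin_of_mulVec_eq_smul _ _ (IsHermitian.mulVec_eigenvectorBasis _ q),
    (rightSingularBasis A).inner_eq_ite, if_neg hpq, mul_zero]

theorem nuclearNorm_eq_sum_norm_toEuclideanLin (A : Matrix (Fin m) (Fin n) ℝ) :
    nuclearNorm A = ∑ p, ‖A.toEuclideanLin (rightSingularBasis A p)‖ := by
  set hH := (posSemidef_conjTranspose_mul_self A).1
  have hnorm (p : Fin n) : ‖A.toEuclideanLin (rightSingularBasis A p)‖ = √(hH.eigenvalues p) := by
    rw [← Real.sqrt_sq (norm_nonneg _), ← real_inner_self_eq_norm_sq,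
      inner_toEuclideanLin_of_mulVec_eq_smul _ _ (hH.mulVec_eigenvectorBasis p),
      (rightSingularBasis A).inner_eq_ite, if_pos rfl, mul_one]
  have hUnitary : star (hH.eigenvectorUnitary : Matrix (Fin n) (Fin n) ℝ) *
      (hH.eigenvectorUnitary : Matrix (Fin n) (Fin n) ℝ) = 1 :=
    Unitary.coe_star_mul_self hH.eigenvectorUnitary
  rw [nuclearNorm, Matrix.PosSemidef.sqrt, Matrix.trace_mul_cycle, hUnitary, one_mul,
    Matrix.trace_diagonal]
  simp [hnorm]

theorem sum_mul_le_nuclearNorm (A Y : Matrix (Fin m) (Fin n) ℝ) (hY : matrixSpectralNorm Y ≤ 1) :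
    ∑ i, ∑ j, A i j * Y i j ≤ nuclearNorm A := by
  rw [sum_mul_eq_sum_inner_toEuclideanLin A Y (rightSingularBasis A),
    nuclearNorm_eq_sum_norm_toEuclideanLin]
  exact sum_inner_le_sum_norm (fun p => ((rightSingularBasis A).orthonormal.1 p).le) _ hY

theorem exists_sum_mul_eq_nuclearNorm (A : Matrix (Fin m) (Fin n) ℝ) :
    ∃ Y : Matrix (Fin m) (Fin n) ℝ, matrixSpectralNorm Y ≤ 1 ∧
      ∑ i, ∑ j, A i j * Y i j = nuclearNorm A := by
  obtain ⟨S, hS, hSA⟩ := exists_norm_le_one_inner_apply_eq_norm (rightSingularBasis A)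
    (pairwise_inner_toEuclideanLin_rightSingularBasis A)
  refine ⟨toEuclideanLin.symm S.toLinearMap, ?_, ?_⟩
  · rwa [matrixSpectralNorm, LinearEquiv.apply_symm_apply]
  · rw [sum_mul_eq_sum_inner_toEuclideanLin _ _ (rightSingularBasis A),
      nuclearNorm_eq_sum_norm_toEuclideanLin]
    simp only [LinearEquiv.apply_symm_apply, ContinuousLinearMap.coe_coe, hSA]

end SingularValueDecomposition

/-- The slice-wise sum of nuclear norms is the dual norm of the slice-wise maximum of
spectral norms: for every family of matrix slices `X`, `∑ k, ‖X k‖_*` is the greatest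
element of `{∑ k ⟪X k, Y k⟫ : ‖Y k‖₂ ≤ 1 for all k}`. -/
theorem sliceNuclearNorm_dual_of_sliceSpectralNorm {K m n : ℕ}
    (X : Fin K → Matrix (Fin m) (Fin n) ℝ) :
    (∀ Y : Fin K → Matrix (Fin m) (Fin n) ℝ, (∀ k, matrixSpectralNorm (Y k) ≤ 1) →
      ∑ k, ∑ i, ∑ j, X k i j * Y k i j ≤ ∑ k, nuclearNorm (X k)) ∧
    (∃ Y : Fin K → Matrix (Fin m) (Fin n) ℝ, (∀ k, matrixSpectralNorm (Y k) ≤ 1) ∧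
      ∑ k, ∑ i, ∑ j, X k i j * Y k i j = ∑ k, nuclearNorm (X k)) := by
  refine ⟨fun Y hY => sum_le_sum fun k _ => sum_mul_le_nuclearNorm (X k) (Y k) (hY k), ?_⟩
  choose Y hY hXY using fun k => exists_sum_mul_eq_nuclearNorm (X k)
  exact ⟨Y, hY, sum_congr rfl fun k _ => hXY k⟩
end

section
/- Exact recovery in the noiseless case: let M ∈ E, let 𝕀 be a finite set of indices of ι with sampling rate p = |𝕀| / |ι| > 0, and let Ψ : E → E be the coordinate projection onto 𝕀. Let H = {i : (U M) i ≠ 0}, define P_S : E → E by P_S(x) = U⁻¹(restriction of U x to H, zero off H), and P_{S⊥}(x) = x − P_S(x). Fix 0 ≤ C₁ < 1 and C₂ > 0 and assume: (a) ⟪Ψ(P_S x), P_S x⟫ ≥ C₂·p·‖P_S x‖² for every x ∈ E; and (b) there exist G, s ∈ E with P_S(s) = s, G = Ψ(s), P_S(G) = U⁻¹(entrywise Real.sign of U M), and ‖P_{S⊥}(G)‖_{U,∞} ≤ C₁. If X̂ ∈ E satisfies Ψ(X̂) = Ψ(M) and ‖X̂‖_{U,1} ≤ ‖X‖_{U,1}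 for every X ∈ E with Ψ(X) = Ψ(M), then X̂ = M. -/
/-!
Write `D = X̂ - M` and read everything in the coordinates of `U`, where `u = U M` has support `H`.
Since `D` vanishes on the samples, `⟪G, D⟫ = ⟪s, Ψ D⟫ = 0`. The certificate `U G` equals `sign u`
on `H` and is bounded by `C₁ < 1` off `H`, so it is a subgradient of the `ℓ¹` norm at `u` which
is strictly smaller than one off `H`: optimality of `X̂` then forces `U D` to vanish off `H`,
i.e. `P_S D = D`, and condition (a) gives `C₂ p ‖D‖² ≤ ⟪Ψ D, D⟫ = 0`.
-/

open scoped RealInnerProductSpace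

noncomputable def toE {ι : Type*} [Fintype ι] (f : ι → ℝ) : EuclideanSpace ℝ ι :=
  (WithLp.equiv 2 (ι → ℝ)).symm f

lemma abs_add_sign_mul_le_abs_add (a b : ℝ) : |a| + Real.sign a * b ≤ |a + b| := by
  rcases lt_trichotomy a 0 with h | rfl | h
  · rw [Real.sign_of_neg h, abs_of_neg h]
    linarith [neg_le_abs (a + b)]
  · simp
  · rw [Real.sign_of_pos h, abs_of_pos h]
    linarith [le_abs_self (a + b)]

/-- At `a = 0` every slope `|g| ≤ c` is a subgradient of `|·|`, with slack `(1 - c) |b|`. -/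
lemma abs_add_mul_add_le_abs_add {a b g c : ℝ} (hsign : a ≠ 0 → g = Real.sign a)
    (hzero : a = 0 → |g| ≤ c) :
    |a| + g * b + (1 - c) * (if a = 0 then |b| else 0) ≤ |a + b| := by
  by_cases ha : a = 0
  · subst ha
    have hgb : g * b ≤ c * |b| :=
      (le_abs_self _).trans <| by
        rw [abs_mul]; exact mul_le_mul_of_nonneg_right (hzero rfl) (abs_nonneg b)
    simp only [abs_zero, if_pos, zero_add]
    linarith
  · rw [hsign ha, if_neg ha, mul_zero, add_zero]
    exact abs_add_sign_mul_le_abs_add a b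

theorem eq_zero_of_sum_abs_add_le_of_dualCertificate {ι : Type*} [Fintype ι]
    {u d g : ι → ℝ} {c : ℝ} (hc : c < 1)
    (hsign : ∀ i, u i ≠ 0 → g i = Real.sign (u i)) (hzero : ∀ i, u i = 0 → |g i| ≤ c)
    (horth : ∑ i, g i * d i = 0) (hle : ∑ i, |u i + d i| ≤ ∑ i, |u i|) :
    ∀ i, u i = 0 → d i = 0 := by
  classical
  set T := ∑ i with u i = 0, |d i| with hT
  have hT_nonneg : 0 ≤ T := Finset.sum_nonneg fun i _ => abs_nonneg (d i)
  have hgain : ∑ i, |u i| + (1 - c) * T ≤ ∑ i, |u i + d i| := by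
    calc ∑ i, |u i| + (1 - c) * T
        = ∑ i, (|u i| + g i * d i + (1 - c) * (if u i = 0 then |d i| else 0)) := by
          rw [Finset.sum_add_distrib, Finset.sum_add_distrib, horth, add_zero, hT,
            Finset.sum_filter, Finset.mul_sum]
      _ ≤ ∑ i, |u i + d i| :=
          Finset.sum_le_sum fun i _ => abs_add_mul_add_le_abs_add (hsign i) (hzero i)
  have hT_zero : T = 0 := by nlinarith
  intro i hi
  have := (Finset.sum_eq_zero_iff_of_nonneg fun j _ => abs_nonneg (d j)).mp hT_zero i
    (Finset.mem_filter.mpr ⟨Finset.mem_univ i, hi⟩)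
  exact abs_eq_zero.mp this

section Coordinates

variable {ι : Type*} [Fintype ι]

@[simp]
lemma toE_apply (f : ι → ℝ) (i : ι) : toE f i = f i := rfl

lemma inner_eq_sum_mul (x y : EuclideanSpace ℝ ι) : ⟪x, y⟫ = ∑ i, x i * y i := by
  simp [PiLp.inner_apply, mul_comm]

lemma inner_eq_sum_mul_map (U : EuclideanSpace ℝ ι ≃ₗᵢ[ℝ] EuclideanSpace ℝ ι)
    (x y : EuclideanSpace ℝ ι) : ⟪x, y⟫ = ∑ i, U x i * U y i := by
  rw [← U.inner_map_map, inner_eq_sum_mul]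

lemma inner_toE_ite_left (P : ι → Prop) [DecidablePred P] (x y : EuclideanSpace ℝ ι) :
    ⟪toE (fun i => if P i then x i else 0), y⟫ = ⟪x, toE (fun i => if P i then y i else 0)⟫ := by
  simp only [inner_eq_sum_mul, toE_apply, ite_mul, mul_ite, zero_mul, mul_zero]

lemma toE_ite_sub (P : ι → Prop) [DecidablePred P] (x y : EuclideanSpace ℝ ι) :
    toE (fun i => if P i then (x - y) i else 0) =
      toE (fun i => if P i then x i else 0) - toE (fun i => if P i then y i else 0) := by
  ext i
  by_cases h : P i <;> simp [h]

lemma abs_apply_le_tensorUinf [Nonempty ι] (U : EuclideanSpace ℝ ι ≃ₗᵢ[ℝ] EuclideanSpace ℝ ι)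
    (A : EuclideanSpace ℝ ι) (i : ι) : |U A i| ≤ tensorUinf U A :=
  Finset.le_sup' (fun j => |U A j|) (Finset.mem_univ i)

end Coordinates

theorem exact_tensor_completion_recovery_general {ι : Type*} [Fintype ι] [Nonempty ι]
    [DecidableEq ι]
    (U : EuclideanSpace ℝ ι ≃ₗᵢ[ℝ] EuclideanSpace ℝ ι)
    (M : EuclideanSpace ℝ ι)
    (𝕀 : Finset ι)
    (Ψ : EuclideanSpace ℝ ι → EuclideanSpace ℝ ι)
    (hΨ : ∀ x, Ψ x = toE fun i => if i ∈ 𝕀 then x i else 0)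
    (p : ℝ) (hppos : 0 < p)
    (PS : EuclideanSpace ℝ ι → EuclideanSpace ℝ ι)
    (hPS : ∀ x, PS x = U.symm (toE fun i => if U M i ≠ 0 then U x i else 0))
    (C₁ C₂ : ℝ) (hC₁1 : C₁ < 1) (hC₂ : 0 < C₂)
    -- (a) `P_S Ψ_𝕀 P_S ≽ C₂ p I`:
    (ha : ∀ x : EuclideanSpace ℝ ι, C₂ * p * ‖PS x‖ ^ 2 ≤ ⟪Ψ (PS x), PS x⟫)
    -- (b) dual certificate:
    (hb : ∃ G s : EuclideanSpace ℝ ι,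
      PS s = s ∧ G = Ψ s ∧ PS G = U.symm (toE fun i => Real.sign (U M i)) ∧
      tensorUinf U (G - PS G) ≤ C₁)
    (Xhat : EuclideanSpace ℝ ι)
    (hfeas : Ψ Xhat = Ψ M)
    (hopt : ∀ X : EuclideanSpace ℝ ι, Ψ X = Ψ M → tensorU1 U Xhat ≤ tensorU1 U X) :
    Xhat = M := by
  obtain ⟨G, s, -, rfl, hPSG, hinf⟩ := hb
  set D := Xhat - M
  have hUPS (x : EuclideanSpace ℝ ι) (i : ι) : U (PS x) i = if U M i ≠ 0 then U x i else 0 := by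
    rw [hPS, U.apply_symm_apply, toE_apply]
  have hΨD : Ψ D = 0 := by rw [hΨ, toE_ite_sub, ← hΨ, ← hΨ, hfeas, sub_self]
  have horth : ⟪Ψ s, D⟫ = 0 := by rw [hΨ, inner_toE_ite_left, ← hΨ, hΨD, inner_zero_right]
  have hsign (i : ι) (hi : U M i ≠ 0) : U (Ψ s) i = Real.sign (U M i) := by
    simpa [hUPS, hi] using congrArg (U · i) hPSG
  have hzero (i : ι) (hi : U M i = 0) : |U (Ψ s) i| ≤ C₁ :=
    calc |U (Ψ s) i| = |U (Ψ s - PS (Ψ s)) i| := by simp [hUPS, hi]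
      _ ≤ tensorUinf U (Ψ s - PS (Ψ s)) := abs_apply_le_tensorUinf U _ i
      _ ≤ C₁ := hinf
  have hsupp : ∀ i, U M i = 0 → U D i = 0 := by
    refine eq_zero_of_sum_abs_add_le_of_dualCertificate hC₁1 hsign hzero ?_ ?_
    · rwa [← inner_eq_sum_mul_map]
    · simpa [tensorU1, D] using hopt M rfl
  have hPSD : PS D = D := U.injective <| by
    ext i
    by_cases hi : U M i = 0 <;> simp [hUPS, hi, hsupp]
  have hD : C₂ * p * ‖D‖ ^ 2 ≤ 0 := by simpa [hPSD, hΨD] using ha D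
  have hsq : ‖D‖ ^ 2 ≤ 0 := nonpos_of_mul_nonpos_right hD (mul_pos hC₂ hppos)
  have hD0 : D = 0 :=
    norm_eq_zero.mp <| (pow_eq_zero_iff two_ne_zero).mp (le_antisymm hsq (sq_nonneg _))
  exact sub_eq_zero.mp hD0

/-- Exact recovery in the noiseless case (`δ = 0` case of Theorem 2 of the paper):
under the incoherence condition (a) and the dual-certificate condition (b), the
minimizer of the tensor `U₁` norm subject to `Ψ(X) = Ψ(M)` equals the true tensor. -/
theorem exact_tensor_completion_recovery {ι : Type*} [Fintype ι] [Nonempty ι]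
    [DecidableEq ι]
    (U : EuclideanSpace ℝ ι ≃ₗᵢ[ℝ] EuclideanSpace ℝ ι)
    (M : EuclideanSpace ℝ ι)
    (𝕀 : Finset ι)
    (Ψ : EuclideanSpace ℝ ι → EuclideanSpace ℝ ι)
    (hΨ : ∀ x, Ψ x = toE fun i => if i ∈ 𝕀 then x i else 0)
    (p : ℝ) (hp : p = (𝕀.card : ℝ) / (Fintype.card ι : ℝ)) (hppos : 0 < p)
    (PS : EuclideanSpace ℝ ι → EuclideanSpace ℝ ι)
    (hPS : ∀ x, PS x = U.symm (toE fun i => if U M i ≠ 0 then U x i else 0))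
    (C₁ C₂ : ℝ) (hC₁0 : 0 ≤ C₁) (hC₁1 : C₁ < 1) (hC₂ : 0 < C₂)
    -- (a) `P_S Ψ_𝕀 P_S ≽ C₂ p I`:
    (ha : ∀ x : EuclideanSpace ℝ ι, C₂ * p * ‖PS x‖ ^ 2 ≤ ⟪Ψ (PS x), PS x⟫)
    -- (b) dual certificate:
    (hb : ∃ G s : EuclideanSpace ℝ ι,
      PS s = s ∧ G = Ψ s ∧ PS G = U.symm (toE fun i => Real.sign (U M i)) ∧
      tensorUinf U (G - PS G) ≤ C₁)
    (Xhat : EuclideanSpace ℝ ι)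
    (hfeas : Ψ Xhat = Ψ M)
    (hopt : ∀ X : EuclideanSpace ℝ ι, Ψ X = Ψ M → tensorU1 U Xhat ≤ tensorU1 U X) :
    Xhat = M :=
  exact_tensor_completion_recovery_general U M 𝕀 Ψ hΨ p hppos PS hPS C₁ C₂ hC₁1 hC₂ ha hb Xhat hfeas
    hopt
end
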